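/- For every imprecise probability tree 𝒫, every upper expectation tree Q̄, every situation s, and every pointwise non-increasing sequence (f_n) of upper semicontinuous, bounded-above variables f_n: Ω → ℝ̄ with pointwise limit f, one has lim_{n→∞} Ē_𝒫(f_n|s) = Ē_𝒫(f|s) and lim_{n→∞} Ē_Q̄(f_n|s) = Ē_Q̄(f|s). -/

import Mathlib

open Filter MeasureTheory Topology
open scoped ENNReal

namespace UEPaper

variable {X : Type} [Fintype X] [Nonempty X] [DecidableEq X]

/-- The set of paths: infinite sequences of states (`ω i` is the `(i+1)`-th state). -/
abbrev Path (X : Type) := ℕ → X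

/-- The prefix `ω^k` of length `k` of a path, as a list (a situation). -/
def prefixList (ω : Path X) (k : ℕ) : List X := (List.range k).map ω

/-- The cylinder event `Γ(s)` of a situation `s`. -/
def cyl (s : List X) : Set (Path X) := {ω | prefixList ω s.length = s}

/-- `f` is `n`-measurable: it depends only on the first `n` states. -/
def NMeas (n : ℕ) (f : Path X → EReal) : Prop :=
  ∀ ω ω' : Path X, prefixList ω n = prefixList ω' n → f ω = f ω'

/-- A gamble: a bounded real-valued global variable. -/
def IsGamble (f : Path X → EReal) : Prop :=
  ∃ B : ℝ, ∀ ω, -(B : EReal) ≤ f ω ∧ f ω ≤ (B : EReal)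

/-- A finitary gamble: an `n`-measurable gamble for some `n`. -/
def IsFinGamble (f : Path X → EReal) : Prop :=
  (∃ n, NMeas n f) ∧ IsGamble f

/-- An upper expectation tree: a coherent upper expectation at each situation. -/
structure UpperExpTree (X : Type) [Fintype X] [Nonempty X] where
  Q : List X → (X → ℝ) → ℝ
  le_sup : ∀ (s : List X) (f : X → ℝ), Q s f ≤ ⨆ x, f x
  subadd : ∀ (s : List X) (f g : X → ℝ), Q s (f + g) ≤ Q s f + Q s g
  pos_homog : ∀ (s : List X) (l : ℝ) (f : X → ℝ), 0 ≤ l → Q s (l • f) = l * Q s f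

/-- A (real-valued) supermartingale for the upper expectation tree `Q`. -/
def IsSupermart (Q : UpperExpTree X) (M : List X → ℝ) : Prop :=
  ∀ s : List X, Q.Q s (fun x => M (s ++ [x])) ≤ M s

/-- The game-theoretic upper expectation of a real-valued variable (used on gambles):
the infimum of `M s` over bounded-below supermartingales `M` with
`liminf_k M(ω^k) ≥ f(ω)` on `Γ(s)`. -/
noncomputable def gtG (Q : UpperExpTree X) (f : Path X → ℝ) (s : List X) : EReal :=
  sInf {a : EReal | ∃ M : List X → ℝ, IsSupermart Q M ∧ (∃ B : ℝ, ∀ t, B ≤ M t) ∧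
    (∀ ω ∈ cyl s,
      (f ω : EReal) ≤ Filter.liminf (fun k => ((M (prefixList ω k) : ℝ) : EReal)) atTop) ∧
    a = ((M s : ℝ) : EReal)}

/-- Extension to bounded-below variables, by continuity w.r.t. upper cuts:
`Ē(f|s) = lim_{c → +∞} Ē(min(f,c)|s)` (the limit of this nondecreasing net is a supremum). -/
noncomputable def gtBB (Q : UpperExpTree X) (f : Path X → EReal) (s : List X) : EReal :=
  ⨆ c : ℝ, gtG Q (fun ω => (f ω ⊓ (c : EReal)).toReal) s

/-- The game-theoretic global upper expectation `Ē_Q̄`, extended to all extended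
real variables by continuity w.r.t. lower cuts:
`Ē(f|s) = lim_{c → −∞} Ē(max(f,c)|s)` (the limit of this nonincreasing net is an infimum). -/
noncomputable def gtUE (Q : UpperExpTree X) (f : Path X → EReal) (s : List X) : EReal :=
  ⨅ c : ℝ, gtBB Q (fun ω => f ω ⊔ (c : EReal)) s

/-- A precise probability tree: a probability mass function at each situation. -/
structure PreciseTree (X : Type) [Fintype X] where
  p : List X → X → ℝ
  nonneg : ∀ (s : List X) (x : X), 0 ≤ p s x
  sum_one : ∀ s : List X, ∑ x, p s x = 1

/-- An imprecise probability tree: a nonempty closed convex set of probability mass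
functions at each situation. -/
structure ImpreciseTree (X : Type) [Fintype X] where
  sets : List X → Set (X → ℝ)
  nonempty' : ∀ s : List X, (sets s).Nonempty
  closed' : ∀ s : List X, IsClosed (sets s)
  convex' : ∀ s : List X, Convex ℝ (sets s)
  prob' : ∀ s : List X, ∀ q ∈ sets s, (∀ x, 0 ≤ q x) ∧ ∑ x, q x = 1

/-- `p ∼ 𝒫`: the precise tree `p` is compatible with the imprecise tree `P`. -/
def Compatible (p : PreciseTree X) (P : ImpreciseTree X) : Prop :=
  ∀ s : List X, p.p s ∈ P.sets s

/-- The probability `P_p(Γ(z)|s)` of the cylinder of `z` conditional on situation `s`. -/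
noncomputable def cylProb (p : List X → X → ℝ) (s z : List X) : ℝ :=
  if s.length < z.length ∧ z.take s.length = s then
    ∏ i ∈ Finset.Ico s.length z.length, p (z.take i) (z.getD i (Classical.arbitrary X))
  else if z.length ≤ s.length ∧ s.take z.length = z then 1 else 0

/-- The σ-algebra `ℱ` on paths generated by the cylinder events. -/
instance cylSigma : MeasurableSpace (Path X) :=
  MeasurableSpace.generateFrom {A | ∃ s : List X, A = cyl s}

/-- `μ` is the probability measure `P_p(·|s)` on `ℱ` determined by the tree `p`. -/
def IsTreeMeasure (p : PreciseTree X) (s : List X) (μ : Measure (Path X)) : Prop :=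
  IsProbabilityMeasure μ ∧ ∀ z : List X, μ (cyl z) = ENNReal.ofReal (cylProb p.p s z)

/-- Positive part of an extended real, in `ℝ≥0∞`. -/
noncomputable def posPart (x : EReal) : ℝ≥0∞ := if x = ⊤ then ⊤ else ENNReal.ofReal x.toReal

/-- The Lebesgue integral `∫ g dμ = ∫ g⁺ dμ − ∫ g⁻ dμ` of an extended-real variable
(well-defined, with value in `(-∞, +∞]`, for bounded-below measurable `g`). -/
noncomputable def integralE (μ : Measure (Path X)) (g : Path X → EReal) : EReal :=
  ((∫⁻ ω, posPart (g ω) ∂μ : ℝ≥0∞) : EReal) - ((∫⁻ ω, posPart (-(g ω)) ∂μ : ℝ≥0∞) : EReal)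

/-- The upper integral `Ē_p(f|s)`: infimum of integrals of bounded-below
`ℱ`-measurable variables dominating `f`. -/
noncomputable def upperInt (μ : Measure (Path X)) (f : Path X → EReal) : EReal :=
  sInf {a : EReal | ∃ g : Path X → EReal, Measurable g ∧ (∃ B : ℝ, ∀ ω, (B : EReal) ≤ g ω) ∧
    (∀ ω, f ω ≤ g ω) ∧ a = integralE μ g}

/-- The measure-theoretic global upper expectation `Ē_𝒫(f|s)`, given the assignment
`Pm` of the measures `P_p(·|s)` to precise trees: the upper envelope of the upper
integrals over all compatible precise trees. -/
noncomputable def muUE (Pm : PreciseTree X → List X → Measure (Path X))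
    (P : ImpreciseTree X) (f : Path X → EReal) (s : List X) : EReal :=
  ⨆ (p : PreciseTree X) (_ : Compatible p P), upperInt (Pm p s) f

/-- The trees `P` and `Q` agree: each `Q̄_s` is the upper envelope of the expectations
corresponding to the credal set `𝒫_s`. -/
def Agree (P : ImpreciseTree X) (Q : UpperExpTree X) : Prop :=
  ∀ (s : List X) (f : X → ℝ),
    Q.Q s f = sSup {r : ℝ | ∃ q ∈ P.sets s, r = ∑ x, f x * q x}

/-- Axioms P1–P5 for a global upper expectation `E` w.r.t. the tree `Q`. -/
structure Axioms (Q : UpperExpTree X) (E : (Path X → EReal) → List X → EReal) : Prop where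
  p1 : ∀ (f : X → ℝ) (s : List X),
    E (fun ω => ((f (ω s.length) : ℝ) : EReal)) s = ((Q.Q s f : ℝ) : EReal)
  p2 : ∀ f : Path X → EReal, IsFinGamble f → ∀ s : List X, E f s = E ((cyl s).indicator f) s
  p3 : ∀ f : Path X → EReal, IsFinGamble f → ∀ s : List X,
    E f s ≤ E (fun ω => E f (prefixList ω (s.length + 1))) s
  p4 : ∀ f g : Path X → EReal, (∀ ω, f ω ≤ g ω) → ∀ s : List X, E f s ≤ E g s
  p5 : ∀ (s : List X) (fn : ℕ → Path X → EReal) (f : Path X → EReal),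
    (∀ n, IsFinGamble (fn n)) → (∃ B : ℝ, ∀ n ω, (B : EReal) ≤ fn n ω) →
    (∀ ω, Tendsto (fun n => fn n ω) atTop (nhds (f ω))) →
    E f s ≤ limsup (fun n => E (fn n) s) atTop

/-- Upper semicontinuity of an extended-real variable on the path space. -/
def USC [TopologicalSpace X] [DiscreteTopology X] (f : Path X → EReal) : Prop :=
  ∀ a : ℝ, IsOpen {ω : Path X | f ω < (a : EReal)}

/-- An `Ω`-capacity (Dellacherie): a monotone `[0,∞]`-valued functional on nonnegative
variables, continuous along nondecreasing sequences, and continuous along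
nonincreasing sequences of nonnegative real-valued upper semicontinuous functions. -/
def IsCapacity [TopologicalSpace X] [DiscreteTopology X]
    (F : (Path X → EReal) → EReal) : Prop :=
  (∀ f : Path X → EReal, (∀ ω, 0 ≤ f ω) → 0 ≤ F f) ∧
  (∀ f g : Path X → EReal, (∀ ω, 0 ≤ f ω) → (∀ ω, 0 ≤ g ω) → (∀ ω, f ω ≤ g ω) → F f ≤ F g) ∧
  (∀ fn : ℕ → Path X → EReal, (∀ n ω, 0 ≤ fn n ω) → Monotone fn →
    Tendsto (fun n => F (fn n)) atTop (nhds (F (fun ω => ⨆ n, fn n ω)))) ∧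
  (∀ fn : ℕ → Path X → EReal, (∀ n ω, 0 ≤ fn n ω ∧ fn n ω < ⊤) → (∀ n, USC (fn n)) →
    Antitone fn →
    Tendsto (fun n => F (fn n)) atTop (nhds (F (fun ω => ⨅ n, fn n ω))))

open Classical in
/-- The metric `δ(ω,ω') = 2^{-n}`, `n` the first (1-based) index where `ω` and `ω'` differ. -/
noncomputable def delta (ω ω' : Path X) : ℝ :=
  if h : ω = ω' then 0
  else (1 / 2 : ℝ) ^ (Nat.find (Function.ne_iff.mp h) + 1)

/-- The product topology on the path space (with `X` discrete). -/
def prodTop (X : Type) : TopologicalSpace (ℕ → X) :=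
  @Pi.topologicalSpace ℕ (fun _ => X) (fun _ => ⊥)

/-!
Both upper expectations are monotone, so `Ē(fn n|s)` decreases to its infimum and it suffices to
show `⨅ n, Ē(fn n|s) ≤ Ē(f|s)`, where `f = ⨅ n, fn n`. Each `fn k` lies below the real-valued
`k`-measurable upper approximation `H_k(ω) = sup {max (fn k) (-k)} over Γ(ω^k)`, and upper
semicontinuity makes `H_k` decrease pointwise to `f`.

Measure-theoretic side: for every `k` pick a compatible precise tree nearly attaining
`Ē_𝒫(H_k|s)`. The compatible trees form a compact set (a product of compact credal sets) on
which `E_p(H_j|s)` is a continuous function of the tree, so a cluster point of the chosen trees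
nearly attains `Ē_𝒫(H_j|s)` for every `j` simultaneously; monotone convergence then passes to `f`.

Game-theoretic side: let `M` be a supermartingale whose limit inferior dominates `f` on `Γ(s)`.
Along every path `M + ε` eventually exceeds some `H_k`; by compactness of `Γ(s)` this happens
before a common depth `m`, and stopping `M` there shows by backward induction that `M(s) + ε`
dominates the game-theoretic upper expectation of `H_m ≥ fn m`.
-/

set_option linter.unusedSectionVars false

lemma tendsto_apply_iInf_of_antitone {α β : Type*} [CompleteLattice α] [CompleteLattice β]
    [TopologicalSpace β] [InfConvergenceClass β] {E : α → β} (hE : Monotone E) {u : ℕ → α}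
    (hu : Antitone u) (h : ⨅ n, E (u n) ≤ E (⨅ n, u n)) :
    Tendsto (fun n => E (u n)) atTop (𝓝 (E (⨅ n, u n))) := by
  rw [← le_antisymm h (le_iInf fun n => hE (iInf_le u n))]
  exact tendsto_atTop_iInf (hE.comp_antitone hu)

lemma IsCompact.exists_forall_le_of_antitone {α : Type*} [TopologicalSpace α] {K : Set α}
    (hK : IsCompact K) {φ : ℕ → α → ℝ} (hφ : ∀ j, Continuous (φ j))
    (hanti : ∀ q ∈ K, Antitone fun j => φ j q) {r : ℝ} (h : ∀ k, ∃ q ∈ K, r ≤ φ k q) :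
    ∃ q ∈ K, ∀ j, r ≤ φ j q := by
  choose q hqK hq using h
  obtain ⟨q₀, hq₀K, hq₀⟩ := hK.exists_mapClusterPt (f := atTop) (u := q)
    (le_principal_iff.2 (mem_map.2 (univ_mem' hqK)))
  refine ⟨q₀, hq₀K, fun j => (isClosed_le continuous_const (hφ j)).mem_of_mapClusterPt hq₀ ?_⟩
  filter_upwards [eventually_ge_atTop j] with k hjk
  exact (hq k).trans (hanti _ (hqK k) hjk)

lemma le_coe_toReal_sup {x : EReal} {B : ℝ} (hx : x ≤ B) (c : ℝ) :
    x ≤ ((x ⊔ c).toReal : EReal) := by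
  rw [EReal.coe_toReal (ne_top_of_le_ne_top (EReal.coe_ne_top (max B c))
      (sup_le (hx.trans (by simp)) (by simp)))
    (ne_bot_of_le_ne_bot (EReal.coe_ne_bot c) le_sup_right)]
  exact le_sup_left

lemma toReal_sup_inf_le_toReal_sup_inf {x y : EReal} (hxy : x ≤ y) (c' c : ℝ) :
    ((x ⊔ c') ⊓ c).toReal ≤ ((y ⊔ c') ⊓ c).toReal := by
  refine EReal.toReal_le_toReal (inf_le_inf_right _ (sup_le_sup_right hxy _)) ?_
    (ne_top_of_le_ne_top (EReal.coe_ne_top c) inf_le_right)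
  refine ne_bot_of_le_ne_bot (EReal.coe_ne_bot (min c' c)) (le_inf ?_ ?_)
  · exact le_sup_of_le_right (EReal.coe_le_coe_iff.2 (min_le_left _ _))
  · exact EReal.coe_le_coe_iff.2 (min_le_right _ _)

noncomputable def pathOf (t : List X) : Path X := fun i => t.getD i (Classical.arbitrary X)

@[simp] lemma prefixList_length (ω : Path X) (k : ℕ) : (prefixList ω k).length = k := by
  simp [prefixList]

lemma prefixList_succ (ω : Path X) (k : ℕ) :
    prefixList ω (k + 1) = prefixList ω k ++ [ω k] := by
  simp [prefixList, List.range_succ]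

lemma take_prefixList (ω : Path X) (k m : ℕ) :
    (prefixList ω m).take k = prefixList ω (min k m) := by
  rw [prefixList, ← List.map_take, List.take_range, prefixList]

lemma mem_cyl_iff_getElem {ω : Path X} {t : List X} :
    ω ∈ cyl t ↔ ∀ i (h : i < t.length), ω i = t[i] := by
  simp only [cyl, Set.mem_ofPred_eq, List.ext_get_iff, prefixList_length, true_and]
  simp [prefixList]

lemma mem_cyl_prefixList (ω : Path X) (k : ℕ) : ω ∈ cyl (prefixList ω k) := by
  simp [cyl]

lemma pathOf_mem_cyl (t : List X) : pathOf t ∈ cyl t := by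
  simp +contextual [mem_cyl_iff_getElem, pathOf]

lemma cyl_subset_cyl_take (t : List X) (k : ℕ) : cyl t ⊆ cyl (t.take k) := by
  intro ω hω
  simp only [cyl, Set.mem_ofPred_eq] at hω ⊢
  rw [← hω, take_prefixList, prefixList_length]

lemma cyl_subset_cyl_of_prefix {s t : List X} (h : s <+: t) : cyl t ⊆ cyl s := by
  simpa [← List.prefix_iff_eq_take.1 h] using cyl_subset_cyl_take t s.length

lemma prefixList_of_mem_cyl {ω : Path X} {t : List X} (h : ω ∈ cyl t) {j : ℕ}
    (hj : j ≤ t.length) : prefixList ω j = t.take j := by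
  rw [← (show prefixList ω t.length = t from h), take_prefixList, min_eq_left hj]

lemma mem_cyl_prefixList_iff {ω ω' : Path X} {k : ℕ} :
    ω' ∈ cyl (prefixList ω k) ↔ ∀ i < k, ω' i = ω i := by
  simp [mem_cyl_iff_getElem, prefixList]

lemma setOf_prefixList_eq_biUnion (p : List X → Prop) (j : ℕ) :
    {ω : Path X | p (prefixList ω j)} = ⋃ t ∈ {t : List X | t.length = j ∧ p t}, cyl t := by
  ext ω
  simp only [Set.mem_ofPred_eq, Set.mem_iUnion, exists_prop]
  refine ⟨fun h => ⟨_, ⟨prefixList_length ω j, h⟩, mem_cyl_prefixList ω j⟩, ?_⟩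
  rintro ⟨t, ⟨rfl, ht⟩, hω⟩
  rwa [show prefixList ω t.length = t from hω]

section Topology

variable [TopologicalSpace X] [DiscreteTopology X]

lemma isClopen_cyl (t : List X) : IsClopen (cyl t) := by
  have : cyl t = ⋂ i : Fin t.length, (fun ω : Path X => ω i) ⁻¹' {t[(i : ℕ)]} := by
    ext ω
    simp only [Set.mem_iInter, Set.mem_preimage, Set.mem_singleton_iff, mem_cyl_iff_getElem]
    exact ⟨fun h i => h i i.2, fun h i hi => h ⟨i, hi⟩⟩
  rw [this]
  exact isClopen_iInter_of_finite fun i =>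
    (isClopen_discrete _).preimage (continuous_apply (i : ℕ))

lemma isOpen_setOf_prefixList (p : List X → Prop) (j : ℕ) :
    IsOpen {ω : Path X | p (prefixList ω j)} := by
  rw [setOf_prefixList_eq_biUnion]
  exact isOpen_biUnion fun t _ => (isClopen_cyl t).isOpen

/-- König's lemma, via compactness of `Γ(s)`. -/
lemma exists_depth_forall_mem_cyl (s : List X) (p : List X → Prop)
    (h : ∀ ω ∈ cyl s, ∃ j, p (prefixList ω j)) :
    ∃ m, ∀ ω ∈ cyl s, ∃ j ≤ m, p (prefixList ω j) := by
  have hcov : cyl s ⊆ ⋃ j : ℕ, {ω : Path X | p (prefixList ω j)} := fun ω hω =>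
    Set.mem_iUnion.2 (h ω hω)
  obtain ⟨F, hF⟩ := (isClopen_cyl s).isClosed.isCompact.elim_finite_subcover _
    (fun j => isOpen_setOf_prefixList p j) hcov
  refine ⟨F.sup id, fun ω hω => ?_⟩
  obtain ⟨j, hjF, hj⟩ := Set.mem_iUnion₂.1 (hF hω)
  exact ⟨j, Finset.le_sup (f := id) hjF, hj⟩

lemma exists_cyl_subset {O : Set (Path X)} (hO : IsOpen O) {ω : Path X} (hω : ω ∈ O) :
    ∃ m, cyl (prefixList ω m) ⊆ O := by
  obtain ⟨I, u, hIu, hsub⟩ := isOpen_pi_iff.1 hO ω hω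
  refine ⟨I.sup id + 1, fun ω' hω' => hsub fun i hi => ?_⟩
  rw [mem_cyl_prefixList_iff.1 hω' i (Nat.lt_succ_of_le (Finset.le_sup (f := id) hi))]
  exact (hIu i hi).2

end Topology

lemma measurableSet_cyl (t : List X) : MeasurableSet (cyl t) :=
  MeasurableSpace.measurableSet_generateFrom ⟨t, rfl⟩

lemma measurable_comp_prefixList {α : Type*} [MeasurableSpace α] (g : List X → α) (j : ℕ) :
    Measurable fun ω : Path X => g (prefixList ω j) := fun S _ => by
  change MeasurableSet {ω | (fun t => g t ∈ S) (prefixList ω j)}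
  rw [setOf_prefixList_eq_biUnion (fun t => g t ∈ S)]
  exact MeasurableSet.biUnion (Set.to_countable _) fun t _ => measurableSet_cyl t

namespace UpperExpTree

variable (Q : UpperExpTree X) (s : List X)

lemma Q_le_of_forall_le {g : X → ℝ} {b : ℝ} (h : ∀ x, g x ≤ b) : Q.Q s g ≤ b :=
  (Q.le_sup s g).trans (ciSup_le h)

lemma Q_zero : Q.Q s 0 = 0 := by
  simpa using Q.pos_homog s 0 0 le_rfl

lemma Q_mono {g h : X → ℝ} (hle : ∀ x, g x ≤ h x) : Q.Q s g ≤ Q.Q s h := by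
  calc Q.Q s g = Q.Q s (h + (g - h)) := by rw [add_sub_cancel]
    _ ≤ Q.Q s h + Q.Q s (g - h) := Q.subadd s h (g - h)
    _ ≤ Q.Q s h := by
      linarith [Q.Q_le_of_forall_le s (g := g - h) (b := 0) fun x => sub_nonpos.2 (hle x)]

lemma le_Q_of_forall_le {g : X → ℝ} {b : ℝ} (h : ∀ x, b ≤ g x) : b ≤ Q.Q s g := by
  have hsub : Q.Q s 0 ≤ Q.Q s g + Q.Q s (-g) := by simpa using Q.subadd s g (-g)
  have hneg : Q.Q s (-g) ≤ -b := Q.Q_le_of_forall_le s fun x => neg_le_neg (h x)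
  linarith [Q.Q_zero s]

lemma Q_const (c : ℝ) : Q.Q s (fun _ => c) = c :=
  le_antisymm (Q.Q_le_of_forall_le s fun _ => le_rfl) (Q.le_Q_of_forall_le s fun _ => le_rfl)

lemma Q_add_const_le (g : X → ℝ) (c : ℝ) : Q.Q s (fun x => g x + c) ≤ Q.Q s g + c :=
  (Q.subadd s g fun _ => c).trans_eq (by rw [Q_const])

end UpperExpTree

/-- The local upper expectation of `g`, `n` steps ahead of `t`, by backward induction. -/
noncomputable def backward (Q : UpperExpTree X) (g : List X → ℝ) : ℕ → List X → ℝ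
  | 0, t => g t
  | n + 1, t => Q.Q t fun x => backward Q g n (t ++ [x])

section Backward

variable (Q : UpperExpTree X) (g : List X → ℝ)

lemma le_backward {lo : ℝ} (hg : ∀ t, lo ≤ g t) (n : ℕ) (t : List X) : lo ≤ backward Q g n t := by
  induction n generalizing t with
  | zero => exact hg t
  | succ n ih => exact Q.le_Q_of_forall_le t fun x => ih _

lemma backward_le_of_forall_append {c : ℝ} (n : ℕ) (t : List X)
    (h : ∀ v : List X, v.length = n → g (t ++ v) ≤ c) : backward Q g n t ≤ c := by
  induction n generalizing t with
  | zero => simpa [backward] using h [] rfl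
  | succ n ih =>
    refine Q.Q_le_of_forall_le t fun x => ih _ fun v hv => ?_
    simpa using h (x :: v) (by simp [hv])

noncomputable def backwardFrom (m : ℕ) (t : List X) : ℝ := backward Q g (m - t.length) t

lemma isSupermart_backwardFrom {m : ℕ} (hg : ∀ t x, m ≤ t.length → g (t ++ [x]) = g t) :
    IsSupermart Q (backwardFrom Q g m) := by
  intro t
  simp only [backwardFrom, List.length_append, List.length_singleton]
  rcases lt_or_ge t.length m with h | h
  · rw [show m - t.length = (m - (t.length + 1)) + 1 by omega, backward]
  · simp only [Nat.sub_eq_zero_of_le h, Nat.sub_eq_zero_of_le (Nat.le_succ_of_le h), backward,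
      hg t _ h, Q.Q_const, le_refl]

lemma comp_prefixList_eq_of_le {m : ℕ} (hg : ∀ t x, m ≤ t.length → g (t ++ [x]) = g t)
    (ω : Path X) {i : ℕ} (hi : m ≤ i) : g (prefixList ω i) = g (prefixList ω m) := by
  induction i, hi using Nat.le_induction with
  | base => rfl
  | succ i hmi ih => rw [prefixList_succ, hg _ _ (by simpa using hmi), ih]

lemma gtG_le_backward {lo : ℝ} (hlo : ∀ t, lo ≤ g t) {m : ℕ}
    (hg : ∀ t x, m ≤ t.length → g (t ++ [x]) = g t) (s : List X) :
    gtG Q (fun ω => g (prefixList ω m)) s ≤ (backward Q g (m - s.length) s : EReal) := by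
  refine sInf_le ⟨backwardFrom Q g m, isSupermart_backwardFrom Q g hg,
    ⟨lo, fun t => le_backward Q g hlo _ t⟩, fun ω _ => ?_, rfl⟩
  have hev : ∀ᶠ k in atTop, ((backwardFrom Q g m (prefixList ω k) : ℝ) : EReal)
      = (g (prefixList ω m) : EReal) := by
    filter_upwards [eventually_ge_atTop m] with k hk
    simp [backwardFrom, Nat.sub_eq_zero_of_le hk, backward, comp_prefixList_eq_of_le g hg ω hk]
  rw [liminf_congr hev, liminf_const]

end Backward

section GameUpperExpectation

variable (Q : UpperExpTree X)

lemma gtG_mono {g h : Path X → ℝ} (hle : ∀ ω, g ω ≤ h ω) (s : List X) :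
    gtG Q g s ≤ gtG Q h s := by
  refine sInf_le_sInf ?_
  rintro a ⟨M, hM, hB, hlim, rfl⟩
  exact ⟨M, hM, hB, fun ω hω => (EReal.coe_le_coe_iff.2 (hle ω)).trans (hlim ω hω), rfl⟩

lemma gtUE_mono (s : List X) : Monotone fun g => gtUE Q g s :=
  fun _ _ hle => iInf_mono fun _ => iSup_mono fun _ =>
    gtG_mono Q (fun ω => toReal_sup_inf_le_toReal_sup_inf (hle ω) _ _) s

lemma gtUE_le_gtG {g : Path X → ℝ} {lo : ℝ} (hlo : ∀ ω, lo ≤ g ω) (s : List X) :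
    gtUE Q (fun ω => g ω) s ≤ gtG Q g s := by
  refine (iInf_le _ lo).trans (iSup_le fun c => gtG_mono Q (fun ω => ?_) s)
  dsimp only
  rw [sup_eq_left.2 (EReal.coe_le_coe_iff.2 (hlo ω)), ← EReal.coe_strictMono.monotone.map_min,
    EReal.toReal_coe]
  exact min_le_left _ _

lemma iInf_gtG_le_gtUE {g : Path X → EReal} {D : ℝ} (hD : ∀ ω, g ω ≤ D) (s : List X) :
    ⨅ c : ℝ, gtG Q (fun ω => (g ω ⊔ c).toReal) s ≤ gtUE Q g s := by
  refine iInf_mono fun c => le_iSup_of_le (max D c) (le_of_eq ?_)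
  congr 2 with ω
  rw [inf_eq_left.2 (sup_le ((hD ω).trans (by simp)) (by simp))]

end GameUpperExpectation

/-- `sup {max (fn k ω) (-k) | ω ∈ Γ(t^k)}`, where `t^k` is the prefix of length `k` of `t`.
The cut at `-k` and an upper bound on `fn` keep this supremum finite, so `toReal` loses nothing. -/
noncomputable def upperApprox (fn : ℕ → Path X → EReal) (k : ℕ) (t : List X) : ℝ :=
  (⨆ ω ∈ cyl (t.take k), fn k ω ⊔ ((-k : ℝ) : EReal)).toReal

section UpperApprox

variable {fn : ℕ → Path X → EReal}

lemma upperApprox_take {k j : ℕ} (hkj : k ≤ j) (t : List X) :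
    upperApprox fn k (t.take j) = upperApprox fn k t := by
  rw [upperApprox, List.take_take, min_eq_left hkj, upperApprox]

lemma upperApprox_append {k : ℕ} {t : List X} (h : k ≤ t.length) (x : X) :
    upperApprox fn k (t ++ [x]) = upperApprox fn k t := by
  rw [upperApprox, List.take_append_of_le_length h, upperApprox]

lemma upperApprox_prefixList {k j : ℕ} (hkj : k ≤ j) (ω : Path X) :
    upperApprox fn k (prefixList ω j) = upperApprox fn k (prefixList ω k) := by
  rw [← upperApprox_take le_rfl (prefixList ω j), take_prefixList, min_eq_left hkj]

variable {B : ℝ} (hB : ∀ ω, fn 0 ω ≤ B) (hanti : Antitone fn)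
include hB hanti

lemma sup_neg_natCast_le (k : ℕ) (ω : Path X) : fn k ω ⊔ ((-k : ℝ) : EReal) ≤ (max B 0 : ℝ) := by
  refine sup_le ((hanti (Nat.zero_le k) ω).trans ((hB ω).trans ?_)) (EReal.coe_le_coe_iff.2 ?_)
  · exact EReal.coe_le_coe_iff.2 (le_max_left _ _)
  · linarith [le_max_right B 0, (Nat.cast_nonneg k : (0 : ℝ) ≤ k)]

lemma coe_upperApprox (k : ℕ) (t : List X) :
    (upperApprox fn k t : EReal) = ⨆ ω ∈ cyl (t.take k), fn k ω ⊔ ((-k : ℝ) : EReal) :=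
  EReal.coe_toReal (ne_top_of_le_ne_top (EReal.coe_ne_top (max B 0))
      (iSup₂_le fun ω _ => sup_neg_natCast_le hB hanti k ω))
    (ne_bot_of_le_ne_bot (EReal.coe_ne_bot (-k))
      (le_iSup₂_of_le (pathOf _) (pathOf_mem_cyl _) le_sup_right))

lemma upperApprox_le (k : ℕ) (t : List X) : upperApprox fn k t ≤ max B 0 := by
  rw [← EReal.coe_le_coe_iff, coe_upperApprox hB hanti]
  exact iSup₂_le fun ω _ => sup_neg_natCast_le hB hanti k ω

lemma neg_le_upperApprox (k : ℕ) (t : List X) : -(k : ℝ) ≤ upperApprox fn k t := by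
  rw [← EReal.coe_le_coe_iff, coe_upperApprox hB hanti]
  exact le_iSup₂_of_le (pathOf _) (pathOf_mem_cyl _) le_sup_right

lemma le_upperApprox {k : ℕ} {t : List X} {ω : Path X} (hω : ω ∈ cyl (t.take k)) :
    fn k ω ≤ upperApprox fn k t := by
  rw [coe_upperApprox hB hanti]
  exact le_iSup₂_of_le ω hω le_sup_left

lemma le_upperApprox_prefixList (k : ℕ) (ω : Path X) :
    fn k ω ≤ upperApprox fn k (prefixList ω k) :=
  le_upperApprox hB hanti (by rw [take_prefixList, min_self]; exact mem_cyl_prefixList ω k)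

lemma upperApprox_anti {k m : ℕ} (hkm : k ≤ m) (t : List X) :
    upperApprox fn m t ≤ upperApprox fn k t := by
  rw [← EReal.coe_le_coe_iff, coe_upperApprox hB hanti, coe_upperApprox hB hanti]
  refine iSup₂_le fun ω hω => le_iSup₂_of_le ω ?_ (sup_le_sup (hanti hkm ω) ?_)
  · simpa [List.take_take, min_eq_left hkm] using cyl_subset_cyl_take (t.take m) k hω
  · exact EReal.coe_le_coe_iff.2 (neg_le_neg (Nat.cast_le.2 hkm))

lemma antitone_upperApprox_prefixList :
    Antitone fun j (ω : Path X) => (upperApprox fn j (prefixList ω j) : EReal) :=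
  fun k m hkm ω => EReal.coe_le_coe_iff.2 <| by
    simpa [upperApprox_prefixList hkm] using upperApprox_anti hB hanti hkm (prefixList ω m)

/-- This is where upper semicontinuity enters. -/
lemma iInf_upperApprox [TopologicalSpace X] [DiscreteTopology X] (husc : ∀ n, USC (fn n))
    (ω : Path X) : ⨅ k, (upperApprox fn k (prefixList ω k) : EReal) = ⨅ n, fn n ω := by
  refine le_antisymm (EReal.le_of_forall_lt_iff_le.1 fun a ha => ?_)
    (iInf_mono fun k => le_upperApprox_prefixList hB hanti k ω)
  obtain ⟨n, hn⟩ := iInf_lt_iff.1 ha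
  obtain ⟨m, hm⟩ := exists_cyl_subset (husc n a) hn
  set k := max (max n m) ⌈-a⌉₊
  have hnk : n ≤ k := (le_max_left n m).trans (le_max_left _ _)
  have hmk : m ≤ k := (le_max_right n m).trans (le_max_left _ _)
  refine (iInf_le _ k).trans ?_
  rw [coe_upperApprox hB hanti]
  refine iSup₂_le fun ω' hω' => sup_le ((hanti hnk ω').trans (hm ?_).le) ?_
  · simpa [take_prefixList, min_eq_left hmk] using
      cyl_subset_cyl_take ((prefixList ω k).take k) m hω'
  · have hak : (⌈-a⌉₊ : ℝ) ≤ k := Nat.cast_le.2 (le_max_right _ _)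
    exact EReal.coe_le_coe_iff.2 (by linarith [Nat.le_ceil (-a)])

end UpperApprox

section Stopping

variable (Q : UpperExpTree X) {g : List X → ℝ} {M : List X → ℝ}

/-- Optional stopping: below a situation where `halted` holds, `M + c` is frozen and already
dominates `g`; elsewhere it is a supermartingale. -/
lemma backward_le_of_stop (hM : IsSupermart Q M) (c : ℝ) {halted : List X → Prop}
    {m : ℕ} (hhalted : ∀ t, t.length ≤ m → halted t → ∀ v, g (t ++ v) ≤ M t + c) {s : List X}
    (hterm : ∀ t, s <+: t → t.length = m → ∃ j, s.length ≤ j ∧ j ≤ m ∧ halted (t.take j))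
    (hsm : s.length ≤ m) : backward Q g (m - s.length) s ≤ M s + c := by
  suffices H : ∀ n t, s <+: t → t.length + n = m →
      (∀ j, s.length ≤ j → j < t.length → ¬ halted (t.take j)) → backward Q g n t ≤ M t + c from
    H _ s List.prefix_rfl (by omega) fun j h1 h2 => absurd h2 (not_lt.2 h1)
  intro n
  induction n with
  | zero =>
    intro t hst htm hnone
    obtain ⟨j, hsj, hjm, hj⟩ := hterm t hst (by omega)
    obtain hjt | rfl := (show j ≤ t.length by omega).lt_or_eq
    · exact absurd hj (hnone j hsj hjt)
    · simpa [backward] using hhalted _ (by omega) (by simpa using hj) []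
  | succ n ih =>
    intro t hst htm hnone
    by_cases ht : halted t
    · exact backward_le_of_forall_append Q g _ t fun v _ => hhalted t (by omega) ht v
    have hchild : ∀ x, backward Q g n (t ++ [x]) ≤ M (t ++ [x]) + c := by
      refine fun x => ih _ (hst.trans (List.prefix_append _ _)) (by simp; omega) fun j hsj hj => ?_
      obtain hjt | rfl := (show j ≤ t.length by simpa using hj).lt_or_eq
      · rw [List.take_append_of_le_length hjt.le]
        exact hnone j hsj hjt
      · simpa using ht
    calc backward Q g (n + 1) t ≤ Q.Q t (fun x => M (t ++ [x]) + c) := Q.Q_mono t hchild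
      _ ≤ Q.Q t (fun x => M (t ++ [x])) + c := Q.Q_add_const_le t _ c
      _ ≤ M t + c := by linarith [hM t]

end Stopping

section GameContinuity

variable [TopologicalSpace X] [DiscreteTopology X] (Q : UpperExpTree X) (s : List X)
  {fn : ℕ → Path X → EReal} {B : ℝ} (hB : ∀ ω, fn 0 ω ≤ B) (hanti : Antitone fn)
  (husc : ∀ n, USC (fn n))
include hB hanti husc

/-- Along every path of `Γ(s)`, `M + ε` eventually exceeds some `upperApprox fn k`; compactness
of `Γ(s)` bounds the depth at which this happens, and optional stopping concludes. -/
lemma iInf_gtUE_le_of_isSupermart {M : List X → ℝ} (hM : IsSupermart Q M)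
    {v : Path X → ℝ} (hv : ∀ ω, ⨅ n, fn n ω ≤ v ω)
    (hMv : ∀ ω ∈ cyl s, (v ω : EReal) ≤ liminf (fun k => (M (prefixList ω k) : EReal)) atTop)
    {ε : ℝ} (hε : 0 < ε) : ⨅ n, gtUE Q (fn n) s ≤ (M s + ε : ℝ) := by
  set halted : List X → Prop := fun t => ∃ k ≤ t.length, upperApprox fn k t ≤ M t + ε
  have hhalts : ∀ ω ∈ cyl s, ∃ j,
      s.length ≤ (prefixList ω j).length ∧ halted (prefixList ω j) := by
    intro ω hω
    have hlt : ⨅ k, (upperApprox fn k (prefixList ω k) : EReal) < (v ω + ε / 2 : ℝ) := by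
      rw [iInf_upperApprox hB hanti husc]
      exact (hv ω).trans_lt (EReal.coe_lt_coe_iff.2 (by linarith))
    obtain ⟨k, hk⟩ := iInf_lt_iff.1 hlt
    have hMlt : ((v ω - ε / 2 : ℝ) : EReal) <
        liminf (fun i => (M (prefixList ω i) : EReal)) atTop :=
      (EReal.coe_lt_coe_iff.2 (by linarith)).trans_le (hMv ω hω)
    obtain ⟨i, hi, hik⟩ := ((eventually_lt_of_lt_liminf hMlt).and
      (eventually_ge_atTop (max k s.length))).exists
    refine ⟨i, by simpa using le_of_max_le_right hik, k, by simpa using le_of_max_le_left hik, ?_⟩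
    rw [upperApprox_prefixList (le_of_max_le_left hik)]
    linarith [EReal.coe_lt_coe_iff.1 hk, EReal.coe_lt_coe_iff.1 hi]
  obtain ⟨m, hm⟩ := exists_depth_forall_mem_cyl s (fun t => s.length ≤ t.length ∧ halted t) hhalts
  have hterm : ∀ t, s <+: t → t.length = m → ∃ j, s.length ≤ j ∧ j ≤ m ∧ halted (t.take j) := by
    rintro t hst rfl
    obtain ⟨j, hjm, hsj, hj⟩ := hm (pathOf t) (cyl_subset_cyl_of_prefix hst (pathOf_mem_cyl t))
    rw [prefixList_length] at hsj
    rw [prefixList_of_mem_cyl (pathOf_mem_cyl t) hjm] at hj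
    exact ⟨j, hsj, hjm, hj⟩
  have hsm : s.length ≤ m := by
    obtain ⟨j, hjm, hsj, -⟩ := hm (pathOf s) (pathOf_mem_cyl s)
    exact (hsj.trans_eq (prefixList_length _ _)).trans hjm
  have hhalted : ∀ t, t.length ≤ m → halted t → ∀ w, upperApprox fn m (t ++ w) ≤ M t + ε := by
    rintro t htm ⟨k, hkt, hk⟩ w
    calc upperApprox fn m (t ++ w) ≤ upperApprox fn k (t ++ w) :=
          upperApprox_anti hB hanti (hkt.trans htm) _
      _ = upperApprox fn k t := by
          rw [← upperApprox_take hkt, List.take_left' rfl]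
      _ ≤ M t + ε := hk
  calc ⨅ n, gtUE Q (fn n) s
      ≤ gtUE Q (fun ω => (upperApprox fn m (prefixList ω m) : EReal)) s :=
        (iInf_le _ m).trans (gtUE_mono Q s fun ω => le_upperApprox_prefixList hB hanti m ω)
    _ ≤ gtG Q (fun ω => upperApprox fn m (prefixList ω m)) s :=
        gtUE_le_gtG Q (fun ω => neg_le_upperApprox hB hanti m _) s
    _ ≤ (backward Q (upperApprox fn m) (m - s.length) s : EReal) :=
        gtG_le_backward Q _ (neg_le_upperApprox hB hanti m) (fun t x h => upperApprox_append h x) s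
    _ ≤ (M s + ε : ℝ) :=
        EReal.coe_le_coe_iff.2 (backward_le_of_stop Q hM ε hhalted hterm hsm)

lemma iInf_gtUE_le : ⨅ n, gtUE Q (fn n) s ≤ gtUE Q (⨅ n, fn n) s := by
  have hf : ∀ ω, (⨅ n, fn n) ω ≤ B := fun ω => by
    rw [iInf_apply]
    exact (iInf_le _ 0).trans (hB ω)
  refine le_trans (le_iInf fun c => le_sInf ?_) (iInf_gtG_le_gtUE Q hf s)
  rintro _ ⟨M, hM, -, hMv, rfl⟩
  refine EReal.le_of_forall_lt_iff_le.1 fun z hz => ?_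
  simpa using iInf_gtUE_le_of_isSupermart Q s hB hanti husc hM
    (fun ω => by rw [← iInf_apply]; exact le_coe_toReal_sup (hf ω) c) hMv
    (sub_pos.2 (EReal.coe_lt_coe_iff.1 hz))

end GameContinuity

lemma posPart_eq_toENNReal (x : EReal) : posPart x = x.toENNReal := rfl

section Integral

variable (μ : Measure (Path X))

lemma integralE_mono : Monotone (integralE μ) := fun _ _ hle =>
  EReal.sub_le_sub
    (EReal.coe_ennreal_le_coe_ennreal_iff.2 (lintegral_mono fun ω =>
      EReal.toENNReal_le_toENNReal (hle ω)))
    (EReal.coe_ennreal_le_coe_ennreal_iff.2 (lintegral_mono fun ω =>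
      EReal.toENNReal_le_toENNReal (EReal.neg_le_neg_iff.2 (hle ω))))

lemma integralE_le_upperInt (f : Path X → EReal) : integralE μ f ≤ upperInt μ f :=
  le_sInf fun _ ⟨_, _, _, hfg, ha⟩ => ha ▸ integralE_mono μ hfg

lemma upperInt_eq_integralE {g : Path X → EReal} (hg : Measurable g) {B : ℝ} (hB : ∀ ω, B ≤ g ω) :
    upperInt μ g = integralE μ g :=
  le_antisymm (sInf_le ⟨g, hg, ⟨B, hB⟩, fun _ => le_rfl, rfl⟩) (integralE_le_upperInt μ g)

lemma tendsto_integralE_of_antitone [IsFiniteMeasure μ] {H : ℕ → Path X → EReal}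
    (hmeas : ∀ j, Measurable (H j)) (hanti : Antitone H) {B : ℝ} (hB : ∀ ω, H 0 ω ≤ B) :
    Tendsto (fun j => integralE μ (H j)) atTop (𝓝 (integralE μ (⨅ j, H j))) := by
  have hlim : ∀ ω, Tendsto (fun j => H j ω) atTop (𝓝 ((⨅ j, H j) ω)) := fun ω => by
    rw [iInf_apply]; exact tendsto_atTop_iInf fun _ _ h => hanti h ω
  have hfin : ∫⁻ ω, (H 0 ω).toENNReal ∂μ ≠ ⊤ := by
    refine ne_top_of_le_ne_top ?_ (lintegral_mono fun ω => EReal.toENNReal_le_toENNReal (hB ω))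
    simp [ENNReal.mul_ne_top, measure_ne_top]
  have hpos := lintegral_tendsto_of_tendsto_of_antitone
    (fun j => (EReal.continuous_toENNReal.measurable.comp (hmeas j)).aemeasurable)
    (ae_of_all μ fun ω _ _ h => EReal.toENNReal_le_toENNReal (hanti h ω)) hfin
    (ae_of_all μ fun ω => EReal.continuous_toENNReal.continuousAt.tendsto.comp (hlim ω))
  have hneg := lintegral_tendsto_of_tendsto_of_monotone
    (fun j => (EReal.continuous_toENNReal.measurable.comp (hmeas j).neg).aemeasurable)
    (ae_of_all μ fun ω _ _ h => EReal.toENNReal_le_toENNReal (EReal.neg_le_neg_iff.2 (hanti h ω)))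
    (ae_of_all μ fun ω => (EReal.continuous_toENNReal.comp continuous_neg).continuousAt.tendsto.comp
      (hlim ω))
  have hfin' : ((∫⁻ ω, ((⨅ j, H j) ω).toENNReal ∂μ : ℝ≥0∞) : EReal) ≠ ⊤ := by
    refine EReal.coe_ennreal_eq_top_iff.not.2
      (ne_top_of_le_ne_top hfin (lintegral_mono fun ω => ?_))
    exact EReal.toENNReal_le_toENNReal (iInf_le (fun j => H j) 0 ω)
  simp only [integralE, posPart_eq_toENNReal, sub_eq_add_neg]
  exact (EReal.continuousAt_add (Or.inl hfin') (Or.inl (EReal.coe_ennreal_ne_bot _))).tendsto.comp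
    ((continuous_coe_ennreal_ereal.tendsto _ |>.comp hpos).prodMk_nhds
      ((continuous_neg.tendsto _).comp (continuous_coe_ennreal_ereal.tendsto _ |>.comp hneg)))

end Integral

/-- `E_q(g(ω^j) | s)`, written out as a polynomial in the transition probabilities `q`. -/
noncomputable def treeExpect (q : List X → X → ℝ) (s : List X) (g : List X → ℝ) (j : ℕ) : ℝ :=
  ∑ v : Fin j → X, g (List.ofFn v) * cylProb q s (List.ofFn v)

lemma continuous_treeExpect (s : List X) (g : List X → ℝ) (j : ℕ) :
    Continuous fun q : List X → X → ℝ => treeExpect q s g j := by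
  refine continuous_finsetSum _ fun v _ => continuous_const.mul ?_
  simp only [cylProb]
  split_ifs
  · exact continuous_finsetProd _ fun i _ => (continuous_apply _).comp (continuous_apply _)
  all_goals exact continuous_const

lemma prefixList_eq_ofFn (ω : Path X) (j : ℕ) :
    prefixList ω j = List.ofFn fun i : Fin j => ω i := by
  apply List.ext_getElem <;> simp [prefixList]

lemma mem_cyl_ofFn_iff {ω : Path X} {j : ℕ} {v : Fin j → X} :
    ω ∈ cyl (List.ofFn v) ↔ (fun i : Fin j => ω i) = v := by
  simp [mem_cyl_iff_getElem, funext_iff, Fin.forall_iff]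

lemma lintegral_comp_prefixList (μ : Measure (Path X)) (G : List X → ℝ≥0∞) (j : ℕ) :
    ∫⁻ ω, G (prefixList ω j) ∂μ = ∑ v : Fin j → X, G (List.ofFn v) * μ (cyl (List.ofFn v)) := by
  have hG : ∀ ω, G (prefixList ω j) =
      ∑ v : Fin j → X, (cyl (List.ofFn v)).indicator (fun _ => G (List.ofFn v)) ω := fun ω => by
    rw [prefixList_eq_ofFn, Finset.sum_eq_single_of_mem _ (Finset.mem_univ fun i : Fin j => ω i)
      fun v _ hv => Set.indicator_of_notMem (mt mem_cyl_ofFn_iff.1 (Ne.symm hv)) _,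
      Set.indicator_of_mem (mem_cyl_ofFn_iff.2 rfl)]
  simp_rw [hG]
  rw [lintegral_finsetSum _ fun v _ => measurable_const.indicator (measurableSet_cyl _)]
  simp only [lintegral_indicator_const (measurableSet_cyl _)]

lemma cylProb_nonneg (p : PreciseTree X) (s z : List X) : 0 ≤ cylProb p.p s z := by
  unfold cylProb
  split_ifs
  · exact Finset.prod_nonneg fun i _ => p.nonneg _ _
  · exact zero_le_one
  · exact le_rfl

lemma treeExpect_nonneg (p : PreciseTree X) (s : List X) {g : List X → ℝ} (hg : ∀ t, 0 ≤ g t)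
    (j : ℕ) : 0 ≤ treeExpect p.p s g j :=
  Finset.sum_nonneg fun _ _ => mul_nonneg (hg _) (cylProb_nonneg p s _)

section TreeMeasure

variable {p : PreciseTree X} {s : List X} {μ : Measure (Path X)} (hμ : IsTreeMeasure p s μ)
include hμ

lemma lintegral_ofReal_comp_prefixList (g : List X → ℝ) (j : ℕ) :
    ∫⁻ ω, ENNReal.ofReal (g (prefixList ω j)) ∂μ =
      ENNReal.ofReal (treeExpect p.p s (fun t => max (g t) 0) j) := by
  rw [lintegral_comp_prefixList μ (fun t => ENNReal.ofReal (g t)), treeExpect,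
    ENNReal.ofReal_sum_of_nonneg fun v _ => mul_nonneg (le_max_right _ _) (cylProb_nonneg p s _)]
  refine Finset.sum_congr rfl fun v _ => ?_
  rw [hμ.2, ENNReal.ofReal_mul (le_max_right _ _), ENNReal.ofReal_max, ENNReal.ofReal_zero,
    max_eq_left (by positivity)]

lemma integralE_comp_prefixList (g : List X → ℝ) (j : ℕ) :
    integralE μ (fun ω => (g (prefixList ω j) : EReal)) = (treeExpect p.p s g j : EReal) := by
  simp only [integralE, posPart_eq_toENNReal, ← EReal.coe_neg, EReal.real_coe_toENNReal]
  rw [lintegral_ofReal_comp_prefixList hμ, lintegral_ofReal_comp_prefixList hμ (fun t => -g t),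
    EReal.coe_ennreal_ofReal, EReal.coe_ennreal_ofReal]
  rw [max_eq_left (treeExpect_nonneg p s (fun _ => le_max_right _ _) j), max_eq_left
    (treeExpect_nonneg p s (fun _ => le_max_right _ _) j), ← EReal.coe_sub, treeExpect, treeExpect,
    treeExpect, ← Finset.sum_sub_distrib]
  simp only [← sub_mul, max_zero_sub_max_neg_zero_eq_self]

end TreeMeasure

lemma isCompact_credal (P : ImpreciseTree X) :
    IsCompact {q : List X → X → ℝ | ∀ t, q t ∈ P.sets t} := by
  have hsub : ∀ t, P.sets t ⊆ Set.Icc 0 1 := fun t q hq => by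
    obtain ⟨hnn, hsum⟩ := P.prob' t q hq
    exact ⟨hnn, fun x =>
      (Finset.single_le_sum (fun y _ => hnn y) (Finset.mem_univ x)).trans hsum.le⟩
  simpa [Set.pi] using isCompact_univ_pi fun t =>
    isCompact_Icc.of_isClosed_subset (P.closed' t) (hsub t)

noncomputable def ImpreciseTree.select (P : ImpreciseTree X) (q : List X → X → ℝ)
    (hq : ∀ t, q t ∈ P.sets t) : PreciseTree X where
  p := q
  nonneg t := (P.prob' t (q t) (hq t)).1
  sum_one t := (P.prob' t (q t) (hq t)).2

lemma muUE_mono (Pm : PreciseTree X → List X → Measure (Path X)) (P : ImpreciseTree X)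
    (s : List X) : Monotone fun g => muUE Pm P g s := fun _ _ hle =>
  iSup₂_mono fun _ _ => sInf_le_sInf fun _ ⟨g, hg, hB, hdom, ha⟩ =>
    ⟨g, hg, hB, fun ω => (hle ω).trans (hdom ω), ha⟩

section MeasureContinuity

variable (P : ImpreciseTree X) {Pm : PreciseTree X → List X → Measure (Path X)}
  (hPm : ∀ (p : PreciseTree X) (s : List X), IsTreeMeasure p s (Pm p s)) (s : List X)
  {fn : ℕ → Path X → EReal} {B : ℝ} (hB : ∀ ω, fn 0 ω ≤ B) (hanti : Antitone fn)
include hPm hB hanti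

/-- Each `Ē_𝒫(H_k|s)` exceeds `z` at some compatible tree; by compactness of the credal product
a single compatible tree serves all `k` at once. -/
lemma exists_credal_forall_le_treeExpect {z : ℝ} (hz : (z : EReal) < ⨅ n, muUE Pm P (fn n) s) :
    ∃ q ∈ {q : List X → X → ℝ | ∀ t, q t ∈ P.sets t},
      ∀ j, z ≤ treeExpect q s (upperApprox fn j) j := by
  have hint : ∀ p j, integralE (Pm p s) (fun ω => (upperApprox fn j (prefixList ω j) : EReal)) =
      treeExpect p.p s (upperApprox fn j) j := fun p j => integralE_comp_prefixList (hPm p s) _ j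
  refine IsCompact.exists_forall_le_of_antitone (isCompact_credal P)
    (fun j => continuous_treeExpect s _ j) (fun q hq k m hkm => ?_) fun k => ?_
  · have := integralE_mono (Pm (P.select q hq) s) (antitone_upperApprox_prefixList hB hanti hkm)
    rw [hint, hint, EReal.coe_le_coe_iff] at this
    exact this
  · obtain ⟨p, hp⟩ := lt_iSup_iff.1 (hz.trans_le ((iInf_le _ k).trans
      (muUE_mono Pm P s fun ω => le_upperApprox_prefixList hB hanti k ω)))
    obtain ⟨hpP, hzp⟩ := lt_iSup_iff.1 hp
    rw [upperInt_eq_integralE _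
      (measurable_comp_prefixList (fun t => (upperApprox fn k t : EReal)) k) (fun ω => EReal.coe_le_coe_iff.2 (neg_le_upperApprox hB hanti k _)), hint] at hzp
    exact ⟨p.p, hpP, (EReal.coe_lt_coe_iff.1 hzp).le⟩

lemma iInf_muUE_le [TopologicalSpace X] [DiscreteTopology X] (husc : ∀ n, USC (fn n)) :
    ⨅ n, muUE Pm P (fn n) s ≤ muUE Pm P (⨅ n, fn n) s := by
  refine EReal.ge_of_forall_gt_iff_ge.1 fun z hz => ?_
  obtain ⟨q, hqK, hq⟩ := exists_credal_forall_le_treeExpect P hPm s hB hanti hz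
  set p := P.select q hqK
  have := (hPm p s).1
  calc (z : EReal)
      ≤ integralE (Pm p s) (⨅ j, fun ω => (upperApprox fn j (prefixList ω j) : EReal)) :=
        ge_of_tendsto' (tendsto_integralE_of_antitone _
          (fun j => measurable_comp_prefixList (fun t => (upperApprox fn j t : EReal)) j)
          (antitone_upperApprox_prefixList hB hanti)
          fun ω => EReal.coe_le_coe_iff.2 (upperApprox_le hB hanti 0 _))
          fun j => (integralE_comp_prefixList (hPm p s) _ j).symm ▸ EReal.coe_le_coe_iff.2 (hq j)
    _ = integralE (Pm p s) (⨅ n, fn n) := by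
        congr 1 with ω
        simpa only [iInf_apply] using iInf_upperApprox hB hanti husc ω
    _ ≤ upperInt (Pm p s) (⨅ n, fn n) := integralE_le_upperInt _ _
    _ ≤ muUE Pm P (⨅ n, fn n) s :=
        le_iSup₂ (f := fun p (_ : Compatible p P) => upperInt (Pm p s) (⨅ n, fn n)) p hqK

end MeasureContinuity

theorem stmt11 [TopologicalSpace X] [DiscreteTopology X]
    (P : ImpreciseTree X) (Q : UpperExpTree X)
    (Pm : PreciseTree X → List X → Measure (Path X))
    (hPm : ∀ (p : PreciseTree X) (s : List X), IsTreeMeasure p s (Pm p s))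
    (s : List X) (fn : ℕ → Path X → EReal) (f : Path X → EReal)
    (husc : ∀ n, USC (fn n)) (hba : ∀ n, ∃ B : ℝ, ∀ ω, fn n ω ≤ (B : EReal))
    (hanti : Antitone fn)
    (hlim : ∀ ω, Tendsto (fun n => fn n ω) atTop (nhds (f ω))) :
    Tendsto (fun n => muUE Pm P (fn n) s) atTop (nhds (muUE Pm P f s)) ∧
    Tendsto (fun n => gtUE Q (fn n) s) atTop (nhds (gtUE Q f s)) := by
  obtain ⟨B, hB⟩ := hba 0
  obtain rfl : f = ⨅ n, fn n := funext fun ω => by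
    rw [iInf_apply]
    exact tendsto_nhds_unique (hlim ω) (tendsto_atTop_iInf fun _ _ h => hanti h ω)
  exact ⟨tendsto_apply_iInf_of_antitone (muUE_mono Pm P s) hanti
      (iInf_muUE_le P hPm s hB hanti husc),
    tendsto_apply_iInf_of_antitone (gtUE_mono Q s) hanti (iInf_gtUE_le Q s hB hanti husc)⟩

end UEPaper
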